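/- arXiv:2410.20912 — 8 statements merged into one kernel-verified Lean document; each statement's English description precedes it below -/
import Mathlib

section
/- Let R be a halidon ring with index m with primitive m-th root of unity ω, let α₁, …, α_{2m} ∈ R, and set u = Σ_{i=1}^m α_i a^{i-1} + Σ_{i=1}^m α_{m+i} a^{i-1}b ∈ R[D_m]. Define, for i = 1, …, m, λ_i = Σ_{r=1}^m α_{m-r+2} ω^{(i-1)(r-1)}, γ_i = Σ_{r=1}^m α_{m+r} ω^{(i-1)(r-1)}, δ_i = Σ_{r=1}^m α_{m+(m-r+2)} ω^{(i-1)(r-1)}, η_i = Σ_{r=1}^m α_r ω^{(i-1)(r-1)}, where the index m−r+2 is reduced modulo m with residue 0 replaced by m. If λ_r η_r − γ_r δ_r is a unit of R for every r = 1, …, m, then u is invertible in R[D_m] and u^{-1} = Σ_{i=1}^m β_i a^{i-1} + Σ_{i=1}^m β_{m+i} a^{i-1}b, where β_i = (1/m) Σ_{r=1}^m η_r (λ_r η_r − γ_r δ_r)^{-1} ω^{(i-1)(r-1)} and β_{m+i} = (1/m) Σ_{r=1}^m (−δ_r) (λ_r η_r − γ_r δ_r)^{-1} ω^{(i-1)(r-1)}.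 -/
open scoped BigOperators

/-- `ω` is a primitive `m`-th root of unity in the halidon sense. -/
def IsHalidonPrimitiveRoot {R : Type*} [CommRing R] (m : ℕ) (ω : R) : Prop :=
  0 < m ∧ ω ^ m = 1 ∧ (∀ k : ℕ, 0 < k → ω ^ k = 1 → m ≤ k) ∧
    ∀ k : ℕ, (∑ r ∈ Finset.range m, ω ^ (r * k)) = if m ∣ k then (m : R) else 0

/-- The element `u = ∑_{i=1}^m α_i a^(i-1) + ∑_{i=1}^m α_{m+i} a^(i-1) b` of `R[D_m]`,
with 0-indexed coefficient functions `A B : ZMod m → R` (`A k = α_{k+1}`, coefficient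
of `a^k`; `B k = α_{m+k+1}`, coefficient of `a^k * b`), where `a = DihedralGroup.r 1`
and `b = DihedralGroup.sr 0`. -/
noncomputable def dihedralElt {R : Type*} [CommRing R] (m : ℕ) [NeZero m]
    (A B : ZMod m → R) : MonoidAlgebra R (DihedralGroup m) :=
  (∑ i : ZMod m, MonoidAlgebra.single (DihedralGroup.r i) (A i)) +
    ∑ i : ZMod m, MonoidAlgebra.single (DihedralGroup.r i * DihedralGroup.sr 0) (B i)

/-- The "forward" Fourier coefficient `η_i = ∑_{r=1}^m α_r ω^((i-1)(r-1))`
(0-indexed: subscript `i ∈ ZMod m` stands for `i + 1`). Applied to the second-half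
coefficients it gives `γ_i = ∑_{r=1}^m α_{m+r} ω^((i-1)(r-1))`. -/
noncomputable def fwdDFT {R : Type*} [CommRing R] (m : ℕ) [NeZero m] (ω : R)
    (A : ZMod m → R) (i : ZMod m) : R :=
  ∑ r : ZMod m, A r * ω ^ (i.val * r.val)

/-- The "reversed" Fourier coefficient `λ_i = ∑_{r=1}^m α_{m-r+2} ω^((i-1)(r-1))`,
the index `m-r+2` being reduced mod `m` with residue `0` replaced by `m`
(0-indexed: the coefficient index `m-r+2` becomes `-r`). Applied to the second-half
coefficients it gives `δ_i = ∑_{r=1}^m α_{m+(m-r+2)} ω^((i-1)(r-1))`. -/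
noncomputable def revDFT {R : Type*} [CommRing R] (m : ℕ) [NeZero m] (ω : R)
    (A : ZMod m → R) (i : ZMod m) : R :=
  ∑ r : ZMod m, A (-r) * ω ^ (i.val * r.val)

/-!
For each `j : ZMod m`, the character `k ↦ ω ^ (j * k)` of the rotation subgroup induces a
representation `ρ_j` of `D_m` on `R²`: rotations act diagonally and reflections
anti-diagonally. It sends `u` to the matrix `!![η_j, γ_j; δ_j, λ_j]`, whose determinant is
`λ_j η_j - γ_j δ_j`. Applying the discrete Fourier transform twice multiplies by `m` and
reflects the index; as `m` is invertible, the family `(ρ_j)_j` is therefore injective on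
`R[D_m]`. So it suffices to see that each `ρ_j` sends the proposed inverse to
`det⁻¹ • adjugate (ρ_j u)`, which comes down to `η_{-j} = λ_j` and `γ_{-j} = δ_j`.
-/

open DihedralGroup MonoidAlgebra

section

variable {R : Type*} [CommSemiring R] {m : ℕ}

def dihedralRep (ψ : AddChar (ZMod m) R) : DihedralGroup m →* Matrix (Fin 2) (Fin 2) R where
  toFun
    | r k => !![ψ k, 0; 0, ψ (-k)]
    | sr k => !![0, ψ (-k); ψ k, 0]
  map_one' := by
    change !![ψ 0, 0; 0, ψ (-0)] = 1
    simp [Matrix.one_fin_two]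
  map_mul' := by
    rintro (a | a) (b | b) <;>
      simp only [r_mul_r, r_mul_sr, sr_mul_r, sr_mul_sr] <;>
      simp [← AddChar.map_add_eq_mul, sub_eq_neg_add, add_comm]

@[simp]
lemma dihedralRep_r (ψ : AddChar (ZMod m) R) (k : ZMod m) :
    dihedralRep ψ (r k) = !![ψ k, 0; 0, ψ (-k)] := rfl

@[simp]
lemma dihedralRep_sr (ψ : AddChar (ZMod m) R) (k : ZMod m) :
    dihedralRep ψ (sr k) = !![0, ψ (-k); ψ k, 0] := rfl

end

lemma IsHalidonPrimitiveRoot.pow_eq_one {R : Type*} [CommRing R] {m : ℕ} {ω : R}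
    (hω : IsHalidonPrimitiveRoot m ω) : ω ^ m = 1 :=
  hω.2.1

section

variable {R : Type*} [CommRing R] {m : ℕ} [NeZero m] {ω : R}

lemma lift_dihedralRep_dihedralElt (ψ : AddChar (ZMod m) R) (A B : ZMod m → R) :
    lift R _ (DihedralGroup m) (dihedralRep ψ) (dihedralElt m A B) =
      !![∑ k, A k * ψ k, ∑ k, B k * ψ k; ∑ k, B k * ψ (-k), ∑ k, A k * ψ (-k)] := by
  ext i j
  fin_cases i <;> fin_cases j <;>
    simp [dihedralElt, r_mul_sr, Matrix.sum_apply]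

lemma eq_dihedralElt (x : MonoidAlgebra R (DihedralGroup m)) :
    x = dihedralElt m (fun i => x.coeff (r i)) (fun i => x.coeff (r i * sr 0)) := by
  conv_lhs => rw [← sum_coeff_single x, Finsupp.sum_fintype _ _ (by simp)]
  rw [← equivSum.symm.sum_comp, Fintype.sum_sum_type, dihedralElt,
    ← Equiv.sum_comp (Equiv.neg (ZMod m)) (fun i => single (r i * sr 0) _)]
  simp

lemma zmodChar_mul (h : ω ^ m = 1) (j k : ZMod m) :
    AddChar.zmodChar m h (j * k) = ω ^ (j.val * k.val) := by
  rw [AddChar.zmodChar_apply, ZMod.val_mul, ← pow_eq_pow_mod _ h]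

lemma fwdDFT_eq_sum_zmodChar (h : ω ^ m = 1) (A : ZMod m → R) (j : ZMod m) :
    fwdDFT m ω A j = ∑ k, A k * AddChar.zmodChar m h (j * k) := by
  simp only [fwdDFT, zmodChar_mul]

lemma revDFT_eq_sum_zmodChar (h : ω ^ m = 1) (A : ZMod m → R) (j : ZMod m) :
    revDFT m ω A j = ∑ k, A k * AddChar.zmodChar m h (j * -k) := by
  rw [revDFT, ← Equiv.sum_comp (Equiv.neg (ZMod m))]
  simp only [Equiv.neg_apply, neg_neg, zmodChar_mul]

lemma revDFT_eq_fwdDFT_neg (h : ω ^ m = 1) (A : ZMod m → R) (j : ZMod m) :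
    revDFT m ω A j = fwdDFT m ω A (-j) := by
  simp only [revDFT_eq_sum_zmodChar h, fwdDFT_eq_sum_zmodChar h, mul_neg, neg_mul]

lemma fwdDFT_const_mul (c : R) (A : ZMod m → R) (j : ZMod m) :
    fwdDFT m ω (fun i => c * A i) j = c * fwdDFT m ω A j := by
  simp only [fwdDFT, Finset.mul_sum, mul_assoc]

namespace IsHalidonPrimitiveRoot

lemma sum_zmodChar_mul (hω : IsHalidonPrimitiveRoot m ω) (c : ZMod m) :
    ∑ j, AddChar.zmodChar m hω.pow_eq_one (j * c) = if c = 0 then (m : R) else 0 := by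
  have hdvd : m ∣ c.val ↔ c = 0 := by rw [← ZMod.natCast_eq_zero_iff, ZMod.natCast_zmod_val]
  simp only [zmodChar_mul, ← hdvd, ← hω.2.2.2]
  obtain ⟨n, rfl⟩ : ∃ n, m = n + 1 := Nat.exists_eq_succ_of_ne_zero (NeZero.ne m)
  exact Fin.sum_univ_eq_sum_range (fun r => ω ^ (r * c.val)) (n + 1)

lemma fwdDFT_fwdDFT (hω : IsHalidonPrimitiveRoot m ω) (A : ZMod m → R) (k : ZMod m) :
    fwdDFT m ω (fwdDFT m ω A) k = m * A (-k) := calc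
  fwdDFT m ω (fwdDFT m ω A) k
      = ∑ l, A l * ∑ j, AddChar.zmodChar m hω.pow_eq_one (j * (l + k)) := by
        simp only [fwdDFT_eq_sum_zmodChar hω.pow_eq_one, Finset.sum_mul, Finset.mul_sum,
          mul_assoc, ← AddChar.map_add_eq_mul]
        rw [Finset.sum_comm]
        congr! 4
        ring
    _ = m * A (-k) := by
        simp [hω.sum_zmodChar_mul, add_eq_zero_iff_eq_neg, mul_comm]

lemma fwdDFT_injective (hω : IsHalidonPrimitiveRoot m ω) (hm : IsUnit (m : R)) :
    Function.Injective (fwdDFT m ω) := by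
  intro A B hAB
  funext k
  have h := congrFun (congrArg (fwdDFT m ω) hAB) (-k)
  rwa [hω.fwdDFT_fwdDFT, hω.fwdDFT_fwdDFT, neg_neg, hm.mul_right_inj] at h

lemma fwdDFT_inverse_mul_fwdDFT (hω : IsHalidonPrimitiveRoot m ω) (hm : IsUnit (m : R))
    (A : ZMod m → R) (j : ZMod m) :
    fwdDFT m ω (fun i => Ring.inverse (m : R) * fwdDFT m ω A i) j = A (-j) := by
  rw [fwdDFT_const_mul, hω.fwdDFT_fwdDFT, ← mul_assoc, Ring.inverse_mul_cancel _ hm, one_mul]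

end IsHalidonPrimitiveRoot

noncomputable def fourierRep (h : ω ^ m = 1) (j : ZMod m) :
    MonoidAlgebra R (DihedralGroup m) →ₐ[R] Matrix (Fin 2) (Fin 2) R :=
  lift R _ (DihedralGroup m) (dihedralRep ((AddChar.zmodChar m h).mulShift j))

lemma fourierRep_dihedralElt (h : ω ^ m = 1) (j : ZMod m) (A B : ZMod m → R) :
    fourierRep h j (dihedralElt m A B) =
      !![fwdDFT m ω A j, fwdDFT m ω B j; revDFT m ω B j, revDFT m ω A j] := by
  simp [fourierRep, lift_dihedralRep_dihedralElt, AddChar.mulShift_apply,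
    fwdDFT_eq_sum_zmodChar h, revDFT_eq_sum_zmodChar h]

lemma IsHalidonPrimitiveRoot.ext_fourierRep (hω : IsHalidonPrimitiveRoot m ω)
    (hm : IsUnit (m : R)) {x y : MonoidAlgebra R (DihedralGroup m)}
    (h : ∀ j, fourierRep hω.pow_eq_one j x = fourierRep hω.pow_eq_one j y) : x = y := by
  rw [eq_dihedralElt x, eq_dihedralElt y] at h ⊢
  simp only [fourierRep_dihedralElt] at h
  congr 1 <;> apply hω.fwdDFT_injective hm <;> funext j
  · simpa using congrFun₂ (h j) 0 0
  · simpa using congrFun₂ (h j) 0 1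

noncomputable def dihedralDet (ω : R) (A B : ZMod m → R) (j : ZMod m) : R :=
  revDFT m ω A j * fwdDFT m ω A j - fwdDFT m ω B j * revDFT m ω B j

lemma det_fourierRep_dihedralElt (h : ω ^ m = 1) (j : ZMod m) (A B : ZMod m → R) :
    (fourierRep h j (dihedralElt m A B)).det = dihedralDet ω A B j := by
  rw [fourierRep_dihedralElt, Matrix.det_fin_two_of, dihedralDet]
  ring

lemma dihedralDet_neg (h : ω ^ m = 1) (A B : ZMod m → R) (j : ZMod m) :
    dihedralDet ω A B (-j) = dihedralDet ω A B j := by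
  simp only [dihedralDet, revDFT_eq_fwdDFT_neg h, neg_neg]
  ring

noncomputable def dihedralInv (ω : R) (A B : ZMod m → R) : MonoidAlgebra R (DihedralGroup m) :=
  dihedralElt m
    (fun i => Ring.inverse (m : R) *
      fwdDFT m ω (fun r => fwdDFT m ω A r * Ring.inverse (dihedralDet ω A B r)) i)
    (fun i => Ring.inverse (m : R) *
      fwdDFT m ω (fun r => -revDFT m ω B r * Ring.inverse (dihedralDet ω A B r)) i)

lemma IsHalidonPrimitiveRoot.fourierRep_dihedralInv (hω : IsHalidonPrimitiveRoot m ω)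
    (hm : IsUnit (m : R)) (j : ZMod m) (A B : ZMod m → R) :
    fourierRep hω.pow_eq_one j (dihedralInv ω A B) =
      (fourierRep hω.pow_eq_one j (dihedralElt m A B))⁻¹ := by
  rw [Matrix.inv_def, det_fourierRep_dihedralElt, fourierRep_dihedralElt,
    Matrix.adjugate_fin_two_of, dihedralInv, fourierRep_dihedralElt]
  simp only [revDFT_eq_fwdDFT_neg hω.pow_eq_one, hω.fwdDFT_inverse_mul_fwdDFT hm, neg_neg,
    dihedralDet_neg hω.pow_eq_one]
  ext i k
  fin_cases i <;> fin_cases k <;> simp [mul_comm]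

end

/-- Let `R` be a halidon ring with index `m` and primitive `m`-th root
of unity `ω`, and `u = ∑ αᵢ a^(i-1) + ∑ α_{m+i} a^(i-1) b ∈ R[D_m]`. With
`λᵢ, γᵢ, δᵢ, ηᵢ` as above, if `λ_r η_r − γ_r δ_r` is a unit of `R` for every `r`, then
`u` is invertible in `R[D_m]`, with inverse `∑ βᵢ a^(i-1) + ∑ β_{m+i} a^(i-1) b` where
`βᵢ = (1/m) ∑_r η_r (λ_r η_r − γ_r δ_r)⁻¹ ω^((i-1)(r-1))` and
`β_{m+i} = (1/m) ∑_r (−δ_r) (λ_r η_r − γ_r δ_r)⁻¹ ω^((i-1)(r-1))`. -/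
theorem dihedral_inverse_formula
    {R : Type*} [CommRing R] (m : ℕ) [NeZero m] (ω : R)
    (hω : IsHalidonPrimitiveRoot m ω) (hm : IsUnit (m : R))
    (A B : ZMod m → R)
    (hunit : ∀ r : ZMod m,
      IsUnit (revDFT m ω A r * fwdDFT m ω A r -
        fwdDFT m ω B r * revDFT m ω B r)) :
    IsUnit (dihedralElt m A B) ∧
    dihedralElt m A B *
      dihedralElt m
        (fun i => Ring.inverse (m : R) *
          ∑ r : ZMod m, fwdDFT m ω A r *
            Ring.inverse (revDFT m ω A r * fwdDFT m ω A r -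
              fwdDFT m ω B r * revDFT m ω B r) * ω ^ (i.val * r.val))
        (fun i => Ring.inverse (m : R) *
          ∑ r : ZMod m, (-(revDFT m ω B r)) *
            Ring.inverse (revDFT m ω A r * fwdDFT m ω A r -
              fwdDFT m ω B r * revDFT m ω B r) * ω ^ (i.val * r.val)) = 1 ∧
    dihedralElt m
        (fun i => Ring.inverse (m : R) *
          ∑ r : ZMod m, fwdDFT m ω A r *
            Ring.inverse (revDFT m ω A r * fwdDFT m ω A r -
              fwdDFT m ω B r * revDFT m ω B r) * ω ^ (i.val * r.val))
        (fun i => Ring.inverse (m : R) *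
          ∑ r : ZMod m, (-(revDFT m ω B r)) *
            Ring.inverse (revDFT m ω A r * fwdDFT m ω A r -
              fwdDFT m ω B r * revDFT m ω B r) * ω ^ (i.val * r.val)) *
      dihedralElt m A B = 1 := by
  change IsUnit (dihedralElt m A B) ∧ dihedralElt m A B * dihedralInv ω A B = 1 ∧
    dihedralInv ω A B * dihedralElt m A B = 1
  have hdet j : IsUnit (fourierRep hω.pow_eq_one j (dihedralElt m A B)).det := by
    rw [det_fourierRep_dihedralElt]
    exact hunit j
  have huv : dihedralElt m A B * dihedralInv ω A B = 1 := hω.ext_fourierRep hm fun j => by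
    rw [map_mul, map_one, hω.fourierRep_dihedralInv hm, Matrix.mul_nonsing_inv _ (hdet j)]
  have hvu : dihedralInv ω A B * dihedralElt m A B = 1 := hω.ext_fourierRep hm fun j => by
    rw [map_mul, map_one, hω.fourierRep_dihedralInv hm, Matrix.nonsing_inv_mul _ (hdet j)]
  exact ⟨⟨⟨_, _, huv, hvu⟩, rfl⟩, huv, hvu⟩
end

section
/- Let R be a commutative ring with identity, let ω ∈ R satisfy ω^m = 1, and let α₁, …, α_{2m} ∈ R. Define λ_i, γ_i, δ_i, η_i ∈ R for i = 1, …, m by λ_i = Σ_{r=1}^m α_{m-r+2} ω^{(i-1)(r-1)}, γ_i = Σ_{r=1}^m α_{m+r} ω^{(i-1)(r-1)}, δ_i = Σ_{r=1}^m α_{m+(m-r+2)} ω^{(i-1)(r-1)}, η_i = Σ_{r=1}^m α_r ω^{(i-1)(r-1)} (indices m−r+2 and subscripts m−i+2 reduced modulo m with residue 0 replaced by m). Assume λ_i η_i − γ_i δ_i is a unit of R and set l_i = η_i (λ_i η_i − γ_i δ_i)^{-1}. Then λ_i λ_{m-i+2} − γ_i γ_{m-i+2} is a unit of R and l_i = λ_{m-i+2}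 (λ_i λ_{m-i+2} − γ_i γ_{m-i+2})^{-1}. -/
open scoped BigOperators

lemma pow_congr_zmod {R : Type*} [CommRing R] {m : ℕ} [NeZero m] {ω : R}
    (hω : ω ^ m = 1) {a b : ℕ} (hab : (a : ZMod m) = (b : ZMod m)) : ω ^ a = ω ^ b := by
  have h' : a % m = b % m := by rwa [ZMod.natCast_eq_natCast_iff, Nat.ModEq] at hab
  conv_lhs => rw [← Nat.div_add_mod a m]
  conv_rhs => rw [← Nat.div_add_mod b m]
  rw [pow_add, pow_add, pow_mul, pow_mul, hω, one_pow, one_pow, h']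

lemma revDFT_neg {R : Type*} [CommRing R] (m : ℕ) [NeZero m] (ω : R)
    (hω : ω ^ m = 1) (A : ZMod m → R) (i : ZMod m) :
    revDFT m ω A (-i) = fwdDFT m ω A i := by
  unfold revDFT fwdDFT
  refine Fintype.sum_equiv (Equiv.neg (ZMod m)) _ _ fun s => ?_
  simp only [Equiv.neg_apply, neg_neg]
  congr 1
  refine pow_congr_zmod hω ?_
  push_cast [ZMod.natCast_val, ZMod.cast_id]
  ring

/-- Let `R` be a commutative ring with identity, `ω ∈ R` with
`ω ^ m = 1`, and `α₁, …, α_{2m} ∈ R`. With `λ, γ, δ, η` as above (subscripts `m-i+2`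
read mod `m` with `0` replaced by `m`, i.e. `-i` when 0-indexed), assume
`λ_i η_i − γ_i δ_i` is a unit of `R` and set `l_i = η_i (λ_i η_i − γ_i δ_i)⁻¹`. Then
`λ_i λ_{m-i+2} − γ_i γ_{m-i+2}` is a unit of `R` and
`l_i = λ_{m-i+2} (λ_i λ_{m-i+2} − γ_i γ_{m-i+2})⁻¹`. -/
theorem l_coeff_symmetric_form {R : Type*} [CommRing R] (m : ℕ) [NeZero m] (ω : R)
    (hω : ω ^ m = 1) (A B : ZMod m → R) (i : ZMod m)
    (h : IsUnit (revDFT m ω A i * fwdDFT m ω A i -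
      fwdDFT m ω B i * revDFT m ω B i)) :
    IsUnit (revDFT m ω A i * revDFT m ω A (-i) -
      fwdDFT m ω B i * fwdDFT m ω B (-i)) ∧
    fwdDFT m ω A i *
        Ring.inverse (revDFT m ω A i * fwdDFT m ω A i -
          fwdDFT m ω B i * revDFT m ω B i) =
      revDFT m ω A (-i) *
        Ring.inverse (revDFT m ω A i * revDFT m ω A (-i) -
          fwdDFT m ω B i * fwdDFT m ω B (-i)) := by
  have h1 : revDFT m ω A (-i) = fwdDFT m ω A i := revDFT_neg m ω hω A i
  have h2 : revDFT m ω B i = fwdDFT m ω B (-i) := by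
    have := revDFT_neg m ω hω B (-i); rwa [neg_neg] at this
  rw [h2] at h ⊢
  rw [h1]
  exact ⟨h, rfl⟩
end

section
/- Let R be a commutative ring with identity, let ω ∈ R satisfy ω^m = 1, and let α₁, …, α_{2m} ∈ R. Define λ_i, γ_i, δ_i, η_i ∈ R for i = 1, …, m by λ_i = Σ_{r=1}^m α_{m-r+2} ω^{(i-1)(r-1)}, γ_i = Σ_{r=1}^m α_{m+r} ω^{(i-1)(r-1)}, δ_i = Σ_{r=1}^m α_{m+(m-r+2)} ω^{(i-1)(r-1)}, η_i = Σ_{r=1}^m α_r ω^{(i-1)(r-1)} (indices m−r+2 and subscripts m−i+2 reduced modulo m with residue 0 replaced by m). Assume λ_i η_i − γ_i δ_i is a unit of R and set s_i = −δ_i (λ_i η_i − γ_i δ_i)^{-1}. Then λ_i λ_{m-i+2} − γ_i γ_{m-i+2} is a unit of R and s_i = −γ_{m-i+2} (λ_i λ_{m-i+2} − γ_i γ_{m-i+2})^{-1}. -/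
open scoped BigOperators

private lemma pow_congr' {R : Type*} [CommRing R] {m : ℕ} {ω : R} (hω : ω ^ m = 1)
    {a b : ℕ} (hab : a % m = b % m) : ω ^ a = ω ^ b := by
  rw [← Nat.div_add_mod a m, ← Nat.div_add_mod b m, pow_add, pow_add, pow_mul, pow_mul,
    hω, one_pow, one_pow, hab]

private lemma rev_eq_fwd {R : Type*} [CommRing R] (m : ℕ) [NeZero m] (ω : R)
    (hω : ω ^ m = 1) (A : ZMod m → R) (i : ZMod m) :
    revDFT m ω A i = fwdDFT m ω A (-i) := by
  unfold revDFT fwdDFT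
  refine Fintype.sum_equiv (Equiv.neg (ZMod m)) _ _ (fun r => ?_)
  simp only [Equiv.neg_apply]
  congr 1
  refine pow_congr' hω ?_
  have hc : ((i.val * r.val : ℕ) : ZMod m) = ((-i).val * (-r).val : ℕ) := by
    push_cast [ZMod.natCast_val, ZMod.cast_id]
    ring
  exact (ZMod.natCast_eq_natCast_iff _ _ _).mp hc

/-- Let `R` be a commutative ring with identity, `ω ∈ R` with
`ω ^ m = 1`, and `α₁, …, α_{2m} ∈ R`. With `λ, γ, δ, η` as above (subscripts `m-i+2`
read mod `m` with `0` replaced by `m`, i.e. `-i` when 0-indexed), assume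
`λ_i η_i − γ_i δ_i` is a unit of `R` and set `s_i = −δ_i (λ_i η_i − γ_i δ_i)⁻¹`. Then
`λ_i λ_{m-i+2} − γ_i γ_{m-i+2}` is a unit of `R` and
`s_i = −γ_{m-i+2} (λ_i λ_{m-i+2} − γ_i γ_{m-i+2})⁻¹`. -/
theorem s_coeff_symmetric_form {R : Type*} [CommRing R] (m : ℕ) [NeZero m] (ω : R)
    (hω : ω ^ m = 1) (A B : ZMod m → R) (i : ZMod m)
    (h : IsUnit (revDFT m ω A i * fwdDFT m ω A i -
      fwdDFT m ω B i * revDFT m ω B i)) :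
    IsUnit (revDFT m ω A i * revDFT m ω A (-i) -
      fwdDFT m ω B i * fwdDFT m ω B (-i)) ∧
    -(revDFT m ω B i) *
        Ring.inverse (revDFT m ω A i * fwdDFT m ω A i -
          fwdDFT m ω B i * revDFT m ω B i) =
      -(fwdDFT m ω B (-i)) *
        Ring.inverse (revDFT m ω A i * revDFT m ω A (-i) -
          fwdDFT m ω B i * fwdDFT m ω B (-i)) := by

  have hA := rev_eq_fwd m ω hω A i
  have hA2 := rev_eq_fwd m ω hω A (-i)
  have hB := rev_eq_fwd m ω hω B i
  rw [neg_neg] at hA2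
  rw [hA, hB, hA2, mul_comm (fwdDFT m ω A (-i)) (fwdDFT m ω A i)]
  rw [hA, hB] at h
  rw [mul_comm (fwdDFT m ω A (-i)) (fwdDFT m ω A i)] at h
  exact ⟨h, rfl⟩
end

section
/- Let R be a halidon ring with index m with primitive m-th root of unity ω, let α₁, …, α_{2m} ∈ R, and suppose that u = Σ_{i=1}^m α_i a^{i-1} + Σ_{i=1}^m α_{m+i} a^{i-1}b is a unit of the group ring R[D_m]. Define λ_i = Σ_{r=1}^m α_{m-r+2} ω^{(i-1)(r-1)} and γ_i = Σ_{r=1}^m α_{m+r} ω^{(i-1)(r-1)} for i = 1, …, m (the index m−r+2 and the subscript m−i+2 being reduced modulo m with residue 0 replaced by m). Then for every i = 1, …, m the element λ_i λ_{m-i+2} − γ_i γ_{m-i+2} is a unit of R. -/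
open scoped BigOperators

/-!
For any `ζ` with `ζ ^ m = 1`, the assignment `r i ↦ diag(ζ⁻ⁱ, ζⁱ)`, `sr i ↦ antidiag(ζⁱ, ζ⁻ⁱ)`
is a representation of `D_m` in `2 × 2` matrices over `R`; it extends to a ring homomorphism on
`R[D_m]`, which maps units to units. At `ζ = ω ^ j` the image of `u` has determinant
`λ_j λ_{-j} - γ_j γ_{-j}`, and a matrix over a commutative ring is a unit iff its determinant is.
-/

section PowVal

variable {M : Type*} [Monoid M] {m : ℕ} {ζ : M}

theorem pow_eq_pow_of_natCast_eq (hζ : ζ ^ m = 1) {a b : ℕ} (h : (a : ZMod m) = b) :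
    ζ ^ a = ζ ^ b := by
  rw [pow_eq_pow_mod a hζ, pow_eq_pow_mod b hζ, (ZMod.natCast_eq_natCast_iff' a b m).mp h]

variable [NeZero m]

theorem pow_val_add (hζ : ζ ^ m = 1) (x y : ZMod m) :
    ζ ^ (x + y).val = ζ ^ x.val * ζ ^ y.val := by
  rw [← pow_add]
  exact pow_eq_pow_of_natCast_eq hζ (by simp)

theorem pow_neg_val_mul_neg_val (hζ : ζ ^ m = 1) (x y : ZMod m) :
    ζ ^ ((-x).val * (-y).val) = ζ ^ (x.val * y.val) :=
  pow_eq_pow_of_natCast_eq hζ (by simp)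

end PowVal

section FourierSum

variable {R : Type*} [CommRing R] {m : ℕ} [NeZero m]

noncomputable def fourierSum (ζ : R) (f : ZMod m → R) : R :=
  ∑ i : ZMod m, f i * ζ ^ i.val

theorem fourierSum_comp_neg (ζ : R) (f : ZMod m → R) :
    fourierSum ζ (fun i => f (-i)) = ∑ i : ZMod m, f i * ζ ^ (-i).val :=
  Fintype.sum_equiv (Equiv.neg (ZMod m)) _ _ fun i => by simp

theorem fourierSum_pow_neg_val {ω : R} (hω : ω ^ m = 1) (j : ZMod m) (f : ZMod m → R) :
    fourierSum (ω ^ (-j).val) f = fourierSum (ω ^ j.val) (fun i => f (-i)) := by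
  rw [fourierSum_comp_neg]
  simp only [fourierSum, ← pow_mul]
  exact Fintype.sum_congr _ _ fun i => by rw [← pow_neg_val_mul_neg_val hω, neg_neg]

theorem fwdDFT_eq_fourierSum (ω : R) (B : ZMod m → R) (j : ZMod m) :
    fwdDFT m ω B j = fourierSum (ω ^ j.val) B := by
  simp only [fwdDFT, fourierSum, pow_mul]

theorem revDFT_eq_fourierSum (ω : R) (A : ZMod m → R) (j : ZMod m) :
    revDFT m ω A j = fourierSum (ω ^ j.val) (fun i => A (-i)) := by
  simp only [revDFT, fourierSum, pow_mul]

end FourierSum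

namespace DihedralGroup

variable {R : Type*} [CommRing R] {m : ℕ} [NeZero m] {ζ : R}

noncomputable def matrixRep (hζ : ζ ^ m = 1) : DihedralGroup m →* Matrix (Fin 2) (Fin 2) R where
  toFun
    | r i => !![ζ ^ (-i).val, 0; 0, ζ ^ i.val]
    | sr i => !![0, ζ ^ i.val; ζ ^ (-i).val, 0]
  map_one' := by
    show !![ζ ^ (-(0 : ZMod m)).val, 0; 0, ζ ^ (0 : ZMod m).val] = 1
    simp [Matrix.one_fin_two]
  map_mul' x y := by
    rcases x with i | i <;> rcases y with j | j <;>
      simp only [r_mul_r, r_mul_sr, sr_mul_r, sr_mul_sr, Matrix.mul_fin_two,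
        mul_zero, zero_mul, add_zero, zero_add, ← pow_val_add hζ] <;>
      · congr 2 <;> ring_nf

theorem lift_matrixRep_dihedralElt (hζ : ζ ^ m = 1) (A B : ZMod m → R) :
    MonoidAlgebra.lift R (Matrix (Fin 2) (Fin 2) R) (DihedralGroup m) (matrixRep hζ)
        (dihedralElt m A B) =
      !![fourierSum ζ (fun i => A (-i)), fourierSum ζ (fun i => B (-i));
        fourierSum ζ B, fourierSum ζ A] := by
  have hr (i : ZMod m) : matrixRep hζ (r i) = !![ζ ^ (-i).val, 0; 0, ζ ^ i.val] := rfl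
  have hsr (i : ZMod m) : matrixRep hζ (r i * sr 0) = !![0, ζ ^ (-i).val; ζ ^ i.val, 0] := by
    rw [r_mul_sr, zero_sub]
    simp only [matrixRep, MonoidHom.coe_mk, OneHom.coe_mk, neg_neg]
  simp only [dihedralElt, map_add, map_sum, MonoidAlgebra.lift_single, hr, hsr,
    fourierSum_comp_neg]
  ext k l
  fin_cases k <;> fin_cases l <;> simp [Matrix.sum_apply, fourierSum]

theorem isUnit_det_of_isUnit_dihedralElt (hζ : ζ ^ m = 1) {A B : ZMod m → R}
    (hu : IsUnit (dihedralElt m A B)) :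
    IsUnit (fourierSum ζ (fun i => A (-i)) * fourierSum ζ A -
      fourierSum ζ (fun i => B (-i)) * fourierSum ζ B) := by
  have hM := hu.map (MonoidAlgebra.lift R _ (DihedralGroup m) (matrixRep hζ))
  rwa [lift_matrixRep_dihedralElt, Matrix.isUnit_iff_isUnit_det, Matrix.det_fin_two_of] at hM

end DihedralGroup

theorem unit_dihedral_implies_fourier_unit_general
    {R : Type*} [CommRing R] (m : ℕ) [NeZero m] (ω : R)
    (hω : IsHalidonPrimitiveRoot m ω)
    (A B : ZMod m → R) (hu : IsUnit (dihedralElt m A B)) :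
    ∀ i : ZMod m,
      IsUnit (revDFT m ω A i * revDFT m ω A (-i) -
        fwdDFT m ω B i * fwdDFT m ω B (-i)) := by
  intro j
  obtain ⟨-, hω1, -, -⟩ := hω
  have hζ : (ω ^ j.val) ^ m = 1 := by rw [pow_right_comm, hω1, one_pow]
  rw [revDFT_eq_fourierSum, revDFT_eq_fourierSum, fwdDFT_eq_fourierSum, fwdDFT_eq_fourierSum,
    fourierSum_pow_neg_val hω1, fourierSum_pow_neg_val hω1]
  simpa only [neg_neg, mul_comm (fourierSum _ B)] using
    DihedralGroup.isUnit_det_of_isUnit_dihedralElt hζ hu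

/-- Let `R` be a halidon ring with index `m` and primitive `m`-th root
of unity `ω`, and suppose `u = ∑ αᵢ a^(i-1) + ∑ α_{m+i} a^(i-1) b` is a unit of
`R[D_m]`. With `λ_i = ∑_r α_{m-r+2} ω^((i-1)(r-1))` and
`γ_i = ∑_r α_{m+r} ω^((i-1)(r-1))` (subscript `m-i+2` read mod `m` with `0` replaced by
`m`, i.e. `-i` when 0-indexed), the element `λ_i λ_{m-i+2} − γ_i γ_{m-i+2}` is a unit
of `R` for every `i`. -/
theorem unit_dihedral_implies_fourier_unit
    {R : Type*} [CommRing R] (m : ℕ) [NeZero m] (ω : R)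
    (hω : IsHalidonPrimitiveRoot m ω) (hm : IsUnit (m : R))
    (A B : ZMod m → R) (hu : IsUnit (dihedralElt m A B)) :
    ∀ i : ZMod m,
      IsUnit (revDFT m ω A i * revDFT m ω A (-i) -
        fwdDFT m ω B i * fwdDFT m ω B (-i)) :=
  unit_dihedral_implies_fourier_unit_general m ω hω A B hu
end

section
/- Let p₁ and p₂ be distinct primes, n = p₁p₂, and g = gcd(p₁ − 1, p₂ − 1). Then ℤ_n = ℤ/nℤ is a halidon ring with index g; that is, g is invertible in ℤ_n and there exists ω ∈ ℤ_n which is a primitive g-th root of unity in the halidon sense: g is the least positive integer with ω^g = 1, and for every integer k, Σ_{r=0}^{g-1} ω^{rk} = g when g ∣ k and = 0 otherwise. -/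
open scoped BigOperators

lemma halidon_of_field {F : Type*} [Field F] {m : ℕ} {ω : F} (hm : 0 < m)
    (h : orderOf ω = m) : IsHalidonPrimitiveRoot m ω := by
  have hpow : ω ^ m = 1 := h ▸ pow_orderOf_eq_one ω
  refine ⟨hm, hpow, fun k hk hk1 => ?_, fun k => ?_⟩
  · exact h ▸ Nat.le_of_dvd hk (orderOf_dvd_of_pow_eq_one hk1)
  · by_cases hdvd : m ∣ k
    · rw [if_pos hdvd]
      have : ∀ r ∈ Finset.range m, ω ^ (r * k) = 1 := by
        intro r _
        obtain ⟨c, rfl⟩ := hdvd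
        rw [show r * (m * c) = m * (r * c) by ring, pow_mul, hpow, one_pow]
      rw [Finset.sum_congr rfl this, Finset.sum_const, Finset.card_range, nsmul_eq_mul, mul_one]
    · rw [if_neg hdvd]
      have hne : ω ^ k ≠ 1 := fun h1 => hdvd (h ▸ orderOf_dvd_of_pow_eq_one h1)
      have heq : (∑ r ∈ Finset.range m, ω ^ (r * k)) = ∑ r ∈ Finset.range m, (ω ^ k) ^ r := by
        refine Finset.sum_congr rfl fun r _ => ?_
        rw [← pow_mul, mul_comm]
      rw [heq, geom_sum_eq hne, ← pow_mul, mul_comm k m, pow_mul, hpow, one_pow,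
        sub_self, zero_div]

lemma halidon_prod {R S : Type*} [CommRing R] [CommRing S] {m : ℕ} {a : R} {b : S}
    (ha : IsHalidonPrimitiveRoot m a) (hb : IsHalidonPrimitiveRoot m b) :
    IsHalidonPrimitiveRoot m ((a, b) : R × S) := by
  obtain ⟨hm, ha1, ham, has⟩ := ha
  obtain ⟨_, hb1, hbm, hbs⟩ := hb
  refine ⟨hm, by simp [Prod.ext_iff, ha1, hb1], fun k hk h1 => ?_, fun k => ?_⟩
  · have := congrArg Prod.fst h1
    exact ham k hk (by simpa using this)
  · refine Prod.ext ?_ ?_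
    · simpa [Prod.fst_sum, apply_ite (Prod.fst : R × S → R)] using has k
    · simpa [Prod.snd_sum, apply_ite (Prod.snd : R × S → S)] using hbs k

lemma halidon_map {R S : Type*} [CommRing R] [CommRing S] (e : R ≃+* S) {m : ℕ} {ω : R}
    (h : IsHalidonPrimitiveRoot m ω) : IsHalidonPrimitiveRoot m (e ω) := by
  obtain ⟨hm, h1, hmin, hs⟩ := h
  refine ⟨hm, by rw [← map_pow, h1, map_one], fun k hk hk1 => ?_, fun k => ?_⟩
  · apply hmin k hk
    apply e.injective
    rw [map_pow, hk1, map_one]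
  · have := congrArg e (hs k)
    simpa [apply_ite e] using this

lemma exists_orderOf_zmod (p : ℕ) [Fact p.Prime] {d : ℕ} (hd : d ∣ p - 1) (hd0 : 0 < d) :
    ∃ ω : ZMod p, orderOf ω = d := by
  obtain ⟨u, hu⟩ := IsCyclic.exists_ofOrder_eq_natCard (α := (ZMod p)ˣ)
  have hcard : Nat.card (ZMod p)ˣ = p - 1 := by
    rw [Nat.card_eq_fintype_card, ZMod.card_units]
  rw [hcard] at hu
  have hu0 : orderOf u ≠ 0 := by rw [hu]; have := (Fact.out : p.Prime).two_le; omega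
  refine ⟨((u ^ ((p - 1) / d) : (ZMod p)ˣ) : ZMod p), ?_⟩
  rw [orderOf_units, ← hu, orderOf_pow_orderOf_div hu0 (hu ▸ hd : d ∣ orderOf u)]

/-- Let `p₁` and `p₂` be distinct primes, `n = p₁ p₂`, and
`g = gcd(p₁ − 1, p₂ − 1)`. Then `ℤ/nℤ` is a halidon ring with index `g`: `g` is
invertible in `ℤ/nℤ` and there exists `ω ∈ ℤ/nℤ` which is a primitive `g`-th root of
unity in the halidon sense. -/
theorem zmod_is_halidon_ring_of_gcd (p₁ p₂ : ℕ) (hp₁ : p₁.Prime) (hp₂ : p₂.Prime)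
    (hne : p₁ ≠ p₂) :
    IsUnit ((Nat.gcd (p₁ - 1) (p₂ - 1) : ℕ) : ZMod (p₁ * p₂)) ∧
    ∃ ω : ZMod (p₁ * p₂),
      IsHalidonPrimitiveRoot (Nat.gcd (p₁ - 1) (p₂ - 1)) ω := by
  haveI : Fact p₁.Prime := ⟨hp₁⟩
  haveI : Fact p₂.Prime := ⟨hp₂⟩
  have h2a := hp₁.two_le
  have h2b := hp₂.two_le
  set g := Nat.gcd (p₁ - 1) (p₂ - 1) with hg
  have hg1 : g ∣ p₁ - 1 := Nat.gcd_dvd_left _ _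
  have hg2 : g ∣ p₂ - 1 := Nat.gcd_dvd_right _ _
  have hgpos : 0 < g := Nat.gcd_pos_of_pos_left _ (by omega)
  have hcop : Nat.Coprime p₁ p₂ := (Nat.coprime_primes hp₁ hp₂).mpr hne
  constructor
  · haveI : NeZero (p₁ * p₂) := ⟨by positivity⟩
    rw [ZMod.isUnit_iff_coprime]
    have c1 : Nat.Coprime (p₁ - 1) p₁ := by
      have h : p₁ - 1 + 1 = p₁ := by omega
      have : Nat.Coprime (p₁ - 1) (p₁ - 1 + 1) := by simp
      rwa [h] at this
    have c2 : Nat.Coprime (p₂ - 1) p₂ := by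
      have h : p₂ - 1 + 1 = p₂ := by omega
      have : Nat.Coprime (p₂ - 1) (p₂ - 1 + 1) := by simp
      rwa [h] at this
    exact Nat.Coprime.mul_right (Nat.Coprime.coprime_dvd_left hg1 c1)
      (Nat.Coprime.coprime_dvd_left hg2 c2)
  · obtain ⟨ω₁, hω₁⟩ := exists_orderOf_zmod p₁ hg1 hgpos
    obtain ⟨ω₂, hω₂⟩ := exists_orderOf_zmod p₂ hg2 hgpos
    exact ⟨(ZMod.chineseRemainder hcop).symm (ω₁, ω₂),
      halidon_map _ (halidon_prod (halidon_of_field hgpos hω₁) (halidon_of_field hgpos hω₂))⟩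
end

section
/- Let p₁ and p₂ be distinct primes, n = p₁p₂, and g = gcd(p₁ − 1, p₂ − 1). If ℤ_n = ℤ/nℤ is a halidon ring with index m (that is, m is invertible in ℤ_n and ℤ_n contains a primitive m-th root of unity in the halidon sense), then m divides g; in particular g is the maximum index for which ℤ_n is a halidon ring. -/
open scoped BigOperators

namespace IsHalidonPrimitiveRoot

variable {R : Type*} [CommRing R] {m : ℕ} {ω : R}

/-- Mapping the sum identity at exponent `k` along `f` gives `m = 0` in `S` unless `m ∣ k`,
since every term of the sum becomes `1`. -/
theorem dvd_of_map_pow_eq_one {S : Type*} [CommRing S] [Nontrivial S]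
    (hω : IsHalidonPrimitiveRoot m ω) (hm : IsUnit (m : R)) (f : R →+* S) {k : ℕ}
    (hk : f ω ^ k = 1) : m ∣ k := by
  by_contra hmk
  have hsum := congrArg f (hω.2.2.2 k)
  have hterms : ∀ r ∈ Finset.range m, f (ω ^ (r * k)) = 1 := fun r _ => by
    rw [map_pow, mul_comm, pow_mul, hk, one_pow]
  rw [map_sum, Finset.sum_congr rfl hterms, if_neg hmk, map_zero] at hsum
  simp only [Finset.sum_const, Finset.card_range, nsmul_eq_mul, mul_one] at hsum
  exact (map_natCast f m ▸ hm.map f).ne_zero hsum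

theorem dvd_card_sub_one {K : Type*} [Field K] [Fintype K]
    (hω : IsHalidonPrimitiveRoot m ω) (hm : IsUnit (m : R)) (f : R →+* K) :
    m ∣ Fintype.card K - 1 := by
  have hfω : f ω ≠ 0 := fun h => by
    simpa [h, zero_pow hω.1.ne'] using congrArg f hω.2.1
  exact hω.dvd_of_map_pow_eq_one hm f (FiniteField.pow_card_sub_one_eq_one _ hfω)

theorem dvd_prime_sub_one {n p : ℕ} [Fact p.Prime] {ω : ZMod n}
    (hω : IsHalidonPrimitiveRoot m ω) (hm : IsUnit (m : ZMod n)) (hpn : p ∣ n) :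
    m ∣ p - 1 :=
  ZMod.card p ▸ hω.dvd_card_sub_one hm (ZMod.castHom hpn (ZMod p))

end IsHalidonPrimitiveRoot

theorem halidon_index_divides_gcd_general (p₁ p₂ : ℕ) (hp₁ : p₁.Prime) (hp₂ : p₂.Prime)
    (m : ℕ) (hm : IsUnit ((m : ℕ) : ZMod (p₁ * p₂)))
    (ω : ZMod (p₁ * p₂)) (hω : IsHalidonPrimitiveRoot m ω) :
    m ∣ Nat.gcd (p₁ - 1) (p₂ - 1) :=
  have := Fact.mk hp₁
  have := Fact.mk hp₂
  Nat.dvd_gcd (hω.dvd_prime_sub_one hm (dvd_mul_right _ _))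
    (hω.dvd_prime_sub_one hm (dvd_mul_left _ _))

/-- Let `p₁` and `p₂` be distinct primes, `n = p₁ p₂`, and
`g = gcd(p₁ − 1, p₂ − 1)`. If `ℤ/nℤ` is a halidon ring with index `m` (i.e. `m` is
invertible in `ℤ/nℤ` and `ℤ/nℤ` contains a primitive `m`-th root of unity in the
halidon sense), then `m ∣ g`; in particular `g` is the maximum index for which `ℤ/nℤ`
is a halidon ring. -/
theorem halidon_index_divides_gcd (p₁ p₂ : ℕ) (hp₁ : p₁.Prime) (hp₂ : p₂.Prime)
    (hne : p₁ ≠ p₂) (m : ℕ) (hm : IsUnit ((m : ℕ) : ZMod (p₁ * p₂)))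
    (ω : ZMod (p₁ * p₂)) (hω : IsHalidonPrimitiveRoot m ω) :
    m ∣ Nat.gcd (p₁ - 1) (p₂ - 1) :=
  halidon_index_divides_gcd_general p₁ p₂ hp₁ hp₂ m hm ω hω
end

section
/- Let p₁ and p₂ be distinct primes, n = p₁p₂, and let m ≥ 1 divide both p₁ − 1 and p₂ − 1. If ω ∈ ℤ_n = ℤ/nℤ is an element whose image in ℤ/p₁ℤ has multiplicative order m and whose image in ℤ/p₂ℤ has multiplicative order m, then ω is a primitive m-th root of unity in ℤ_n in the halidon sense: m is the least positive integer with ω^m = 1, and for every integer k, Σ_{r=0}^{m-1} ω^{rk} = m when m ∣ k and = 0 otherwise. -/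
open scoped BigOperators

/-!
By the Chinese remainder theorem `ℤ/nℤ ≅ ℤ/p₁ℤ × ℤ/p₂ℤ`, and all three defining properties
of a halidon root can be checked componentwise. In a ring without zero divisors, an element `x`
of order `m` is a halidon root: if `m ∤ k` then `y = x ^ k ≠ 1` while `y ^ m = 1`, so
`(y - 1) ∑ y ^ r = y ^ m - 1 = 0` forces the geometric sum to vanish.
-/

open Finset

theorem geom_sum_eq_zero_of_pow_eq_one {R : Type*} [Ring R] [NoZeroDivisors R] {y : R} {n : ℕ}
    (hyn : y ^ n = 1) (hy : y ≠ 1) : ∑ i ∈ range n, y ^ i = 0 := by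
  have h := mul_geom_sum y n
  rw [hyn, sub_self] at h
  exact (mul_eq_zero.mp h).resolve_left (sub_ne_zero.mpr hy)

namespace IsHalidonPrimitiveRoot

variable {R S : Type*} [CommRing R] [CommRing S] {m : ℕ}

theorem of_orderOf_eq [NoZeroDivisors R] {x : R} (hm : 0 < m) (hx : orderOf x = m) :
    IsHalidonPrimitiveRoot m x := by
  subst hx
  refine ⟨hm, pow_orderOf_eq_one x, fun k hk hxk => orderOf_le_of_pow_eq_one hk hxk,
    fun k => ?_⟩
  split_ifs with hdvd
  · have hxk : x ^ k = 1 := orderOf_dvd_iff_pow_eq_one.mp hdvd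
    simp [pow_mul', hxk]
  · have hxk : x ^ k ≠ 1 := mt orderOf_dvd_of_pow_eq_one hdvd
    simp_rw [pow_mul']
    refine geom_sum_eq_zero_of_pow_eq_one ?_ hxk
    rw [← pow_mul, pow_mul', pow_orderOf_eq_one, one_pow]

theorem prodMk {x : R} {y : S} (hx : IsHalidonPrimitiveRoot m x)
    (hy : IsHalidonPrimitiveRoot m y) : IsHalidonPrimitiveRoot m (x, y) := by
  obtain ⟨hm, hxm, hx_min, hx_sum⟩ := hx
  obtain ⟨-, hym, -, hy_sum⟩ := hy
  refine ⟨hm, Prod.ext hxm hym, fun k hk hk1 => hx_min k hk (congrArg Prod.fst hk1),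
    fun k => ?_⟩
  ext
  · simpa [Prod.fst_sum, apply_ite Prod.fst] using hx_sum k
  · simpa [Prod.snd_sum, apply_ite Prod.snd] using hy_sum k

theorem of_map_of_injective (f : R →+* S) (hf : Function.Injective f) {x : R}
    (h : IsHalidonPrimitiveRoot m (f x)) : IsHalidonPrimitiveRoot m x := by
  obtain ⟨hm, hxm, hx_min, hx_sum⟩ := h
  refine ⟨hm, hf ?_, fun k hk hxk => hx_min k hk ?_, fun k => hf ?_⟩
  · rw [map_pow, hxm, map_one]
  · rw [← map_pow, hxk, map_one]
  · simpa [map_sum, apply_ite f] using hx_sum k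

end IsHalidonPrimitiveRoot

theorem ZMod.castHom_prod_castHom_injective {a b : ℕ} (h : a.Coprime b) :
    Function.Injective
      ((ZMod.castHom (dvd_mul_right a b) (ZMod a)).prod
        (ZMod.castHom (dvd_mul_left b a) (ZMod b))) := by
  -- ring homs out of `ZMod (a * b)` are unique, so this pair of casts is the CRT isomorphism
  convert (ZMod.chineseRemainder h).injective
  exact congrArg DFunLike.coe (Subsingleton.elim _ (ZMod.chineseRemainder h).toRingHom)

theorem halidon_root_of_orders_general (p₁ p₂ : ℕ) (hp₁ : p₁.Prime) (hp₂ : p₂.Prime)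
    (hne : p₁ ≠ p₂) (m : ℕ) (hm : 1 ≤ m)
    (ω : ZMod (p₁ * p₂))
    (h₁ : orderOf (ZMod.castHom (dvd_mul_right p₁ p₂) (ZMod p₁) ω) = m)
    (h₂ : orderOf (ZMod.castHom (dvd_mul_left p₂ p₁) (ZMod p₂) ω) = m) :
    IsHalidonPrimitiveRoot m ω := by
  have : Fact p₁.Prime := ⟨hp₁⟩
  have : Fact p₂.Prime := ⟨hp₂⟩
  have hcop : p₁.Coprime p₂ := (Nat.coprime_primes hp₁ hp₂).mpr hne
  exact .of_map_of_injective _ (ZMod.castHom_prod_castHom_injective hcop)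
    ((IsHalidonPrimitiveRoot.of_orderOf_eq hm h₁).prodMk (.of_orderOf_eq hm h₂))

/-- Let `p₁, p₂` be distinct primes, `n = p₁ p₂`, and let `m ≥ 1`
divide both `p₁ − 1` and `p₂ − 1`. If `ω ∈ ℤ/nℤ` has image of multiplicative order `m`
in `ℤ/p₁ℤ` and image of multiplicative order `m` in `ℤ/p₂ℤ`, then `ω` is a primitive
`m`-th root of unity of `ℤ/nℤ` in the halidon sense. -/
theorem halidon_root_of_orders (p₁ p₂ : ℕ) (hp₁ : p₁.Prime) (hp₂ : p₂.Prime)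
    (hne : p₁ ≠ p₂) (m : ℕ) (hm : 1 ≤ m)
    (hm₁ : m ∣ p₁ - 1) (hm₂ : m ∣ p₂ - 1)
    (ω : ZMod (p₁ * p₂))
    (h₁ : orderOf (ZMod.castHom (dvd_mul_right p₁ p₂) (ZMod p₁) ω) = m)
    (h₂ : orderOf (ZMod.castHom (dvd_mul_left p₂ p₁) (ZMod p₂) ω) = m) :
    IsHalidonPrimitiveRoot m ω :=
  halidon_root_of_orders_general p₁ p₂ hp₁ hp₂ hne m hm ω h₁ h₂
end

section
/- Let R be a halidon ring with index m with primitive m-th root of unity ω, and let d be a positive divisor of m such that d is invertible in R. Then ω^{m/d} is a primitive d-th root of unity of R in the halidon sense (d is the least positive integer with (ω^{m/d})^d = 1, and Σ_{r=0}^{d-1} (ω^{m/d})^{rk} equals d if d ∣ k and 0 otherwise); hence R is also a halidon ring with index d. -/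
/-!
Write `m = d * e`. Summing `ω ^ (r * e * k)` over `r < m` runs `e` times through the
`d`-periodic sequence `(ω ^ e) ^ (s * k)`, so it equals `e` times the sum for `ω ^ e`; since
`e` is invertible (it divides `m`), the halidon sum identity for `ω` at exponent `e * k`
yields the one for `ω ^ e` at `k`.
-/

open scoped BigOperators

open Finset

theorem Function.Periodic.sum_range_mul {M : Type*} [AddCommMonoid M] {f : ℕ → M} {d : ℕ}
    (hf : Function.Periodic f d) (e : ℕ) :
    ∑ r ∈ range (e * d), f r = e • ∑ r ∈ range d, f r := by
  induction e with
  | zero => simp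
  | succ e ih =>
    have hshift : ∀ s, f (e * d + s) = f s := fun s => by
      rw [add_comm]; exact (hf.nat_mul e) s
    simp only [Nat.succ_mul, sum_range_add, ih, hshift, succ_nsmul]

theorem periodic_pow_mul_of_pow_eq_one {M : Type*} [Monoid M] {ζ : M} {d : ℕ}
    (hζ : ζ ^ d = 1) (k : ℕ) : Function.Periodic (fun r => ζ ^ (r * k)) d := fun r => by
  simp only [add_mul, pow_add, pow_mul ζ d, hζ, one_pow, mul_one]

namespace IsHalidonPrimitiveRoot

variable {R : Type*} [CommRing R] {ω : R}

theorem pow_of_mul {d e : ℕ} (hω : IsHalidonPrimitiveRoot (d * e) ω) (he : IsUnit (e : R)) :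
    IsHalidonPrimitiveRoot d (ω ^ e) := by
  obtain ⟨hde, hω_pow, hω_min, hω_sum⟩ := hω
  have hd : 0 < d := Nat.pos_of_mul_pos_right hde
  have he0 : 0 < e := Nat.pos_of_mul_pos_left hde
  have hζ : (ω ^ e) ^ d = 1 := by rw [← pow_mul, mul_comm, hω_pow]
  refine ⟨hd, hζ, fun k hk hk1 => ?_, fun k => he.mul_left_cancel ?_⟩
  · have := hω_min (e * k) (by positivity) (by rwa [pow_mul])
    rw [mul_comm d e] at this
    exact Nat.le_of_mul_le_mul_left this he0
  · calc (e : R) * ∑ s ∈ range d, (ω ^ e) ^ (s * k)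
        = ∑ r ∈ range (e * d), (ω ^ e) ^ (r * k) := by
          rw [(periodic_pow_mul_of_pow_eq_one hζ k).sum_range_mul, nsmul_eq_mul]
      _ = ∑ r ∈ range (d * e), ω ^ (r * (e * k)) := by
          simp only [mul_comm e d, ← pow_mul, mul_left_comm e]
      _ = if d * e ∣ e * k then ((d * e : ℕ) : R) else 0 := hω_sum (e * k)
      _ = (e : R) * if d ∣ k then (d : R) else 0 := by
          simp only [mul_comm d e, Nat.mul_dvd_mul_iff_left he0]
          split_ifs <;> push_cast <;> ring

theorem pow_div {m d : ℕ} (hω : IsHalidonPrimitiveRoot m ω) (hm : IsUnit (m : R))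
    (hdm : d ∣ m) : IsHalidonPrimitiveRoot d (ω ^ (m / d)) := by
  obtain ⟨e, rfl⟩ := hdm
  have hd : 0 < d := Nat.pos_of_mul_pos_right hω.1
  rw [Nat.mul_div_cancel_left e hd]
  exact hω.pow_of_mul (isUnit_of_dvd_unit (Nat.cast_dvd_cast (dvd_mul_left e d)) hm)

end IsHalidonPrimitiveRoot

theorem halidon_ring_of_divisor_index_general {R : Type*} [CommRing R] (m : ℕ) (ω : R)
    (hω : IsHalidonPrimitiveRoot m ω) (hm : IsUnit (m : R))
    (d : ℕ) (hdm : d ∣ m) :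
    IsHalidonPrimitiveRoot d (ω ^ (m / d)) ∧
    ∃ ω' : R, IsHalidonPrimitiveRoot d ω' ∧ IsUnit (d : R) :=
  have hωd := hω.pow_div hm hdm
  ⟨hωd, ω ^ (m / d), hωd, isUnit_of_dvd_unit (Nat.cast_dvd_cast hdm) hm⟩

/-- Let `R` be a halidon ring with index `m` and primitive `m`-th
root of unity `ω`, and let `d` be a positive divisor of `m` such that `d` is invertible
in `R`. Then `ω^(m/d)` is a primitive `d`-th root of unity of `R` in the halidon sense;
hence `R` is also a halidon ring with index `d`. -/
theorem halidon_ring_of_divisor_index {R : Type*} [CommRing R] (m : ℕ) (ω : R)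
    (hω : IsHalidonPrimitiveRoot m ω) (hm : IsUnit (m : R))
    (d : ℕ) (hd0 : 0 < d) (hdm : d ∣ m) (hd : IsUnit (d : R)) :
    IsHalidonPrimitiveRoot d (ω ^ (m / d)) ∧
    ∃ ω' : R, IsHalidonPrimitiveRoot d ω' ∧ IsUnit (d : R) :=
  halidon_ring_of_divisor_index_general m ω hω hm d hdm
end
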